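/- Let 1 ≤ m < n be integers and define f_0 : ℝ^n → ℝ^n by f_0(x) := (x_1 − x_{m+1}, …, x_m − x_{m+1}, 0, …, 0). Then there exists a continuous map f : ℝ^n → ℝ^n satisfying: (i) f(x) = f_0(x) for every x with x_1 ≥ ⋯ ≥ x_n ≥ 0; (ii) f(g·x) = g·f(x) for every x ∈ ℝ^n and every signed permutation g (acting by (g·x)_i := ε_i x_{σ^{-1}(i)} with ε ∈ {±1}^n and σ a permutation); and (iii) for every x ∈ ℝ^n, at most m coordinates of f(x) are nonzero. -/

import Mathlib

/-!
Let `t(x)` be the `(m+1)`-st largest of `|x_1|, …, |x_n|` and let `f` soft-threshold every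
coordinate at level `t(x)`, i.e. `f(x)_i = sign(x_i) · max(|x_i| - t(x), 0)`. Being a max-min of
coordinates, `t` is continuous, and it is invariant under signed permutations; since soft
thresholding is odd, `f` is equivariant. At most `m` coordinates satisfy `|x_i| > t(x)`, so `f(x)`
has at most `m` nonzero entries, and on `Λ_n` we have `t(x) = x_{m+1}`, which gives `f = f_0`.
-/

open Finset

section DescOrderStat

variable {α : Type*} [LinearOrder α] {n : ℕ}

/-- The `k`-th largest entry of `x`, counting from `0` and with multiplicity, written as a
max-min over the `(k + 1)`-element sets of indices. -/
def descOrderStat (k : Fin n) (x : Fin n → α) : α :=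
  (univ.powersetCard (k + 1)).attach.sup'
    (attach_nonempty_iff.2 <| powersetCard_nonempty.2 <| by simp)
    fun S => S.1.inf' (card_pos.1 <| by rw [(mem_powersetCard_univ.1 S.2)]; omega) x

variable {k : Fin n} {x : Fin n → α} {a : α}

theorem le_descOrderStat {S : Finset (Fin n)} (hS : #S = k + 1) (h : ∀ i ∈ S, a ≤ x i) :
    a ≤ descOrderStat k x :=
  le_sup'_of_le _ (mem_attach _ ⟨S, mem_powersetCard_univ.2 hS⟩) (le_inf' _ _ h)

theorem descOrderStat_le (h : ∀ S : Finset (Fin n), #S = k + 1 → ∃ i ∈ S, x i ≤ a) :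
    descOrderStat k x ≤ a :=
  sup'_le _ _ fun S _ =>
    let ⟨_, hi, hxi⟩ := h S.1 (mem_powersetCard_univ.1 S.2)
    inf'_le_of_le _ hi hxi

theorem exists_le_descOrderStat {S : Finset (Fin n)} (hS : #S = k + 1) :
    ∃ i ∈ S, x i ≤ descOrderStat k x := by
  obtain ⟨i, hi, hxi⟩ := exists_mem_eq_inf' (card_pos.1 (by omega : 0 < #S)) x
  exact ⟨i, hi, le_descOrderStat hS (fun j hj => hxi ▸ inf'_le x hj)⟩

theorem card_lt_descOrderStat_le : #{i | descOrderStat k x < x i} ≤ k := by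
  by_contra! hcard
  obtain ⟨S, hS, hScard⟩ := exists_subset_card_eq (s := {i | descOrderStat k x < x i}) hcard
  obtain ⟨i, hi, hxi⟩ := exists_le_descOrderStat (x := x) hScard
  exact (mem_filter.1 (hS hi)).2.not_ge hxi

theorem descOrderStat_comp_perm (σ : Equiv.Perm (Fin n)) :
    descOrderStat k (x ∘ σ) = descOrderStat k x := by
  have key : ∀ (y : Fin n → α) (τ : Equiv.Perm (Fin n)),
      descOrderStat k (y ∘ τ) ≤ descOrderStat k y := fun y τ =>
    descOrderStat_le fun S hS => by
      obtain ⟨i, hi, hyi⟩ := exists_le_descOrderStat (x := y) (S := S.map τ.toEmbedding)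
        (by rwa [card_map])
      obtain ⟨j, hj, rfl⟩ := mem_map.1 hi
      exact ⟨j, hj, hyi⟩
  exact le_antisymm (key x σ) (by simpa [Function.comp_assoc] using key (x ∘ σ) σ.symm)

theorem descOrderStat_of_antitone (hx : Antitone x) : descOrderStat k x = x k := by
  refine le_antisymm (descOrderStat_le fun S hS => ?_) (le_descOrderStat (S := Iic k) ?_ ?_)
  · have : ¬ S ⊆ Iio k := fun h => by simpa [hS] using card_le_card h
    obtain ⟨j, hj, hkj⟩ := not_subset.1 this
    exact ⟨j, hj, hx (not_lt.1 (by simpa using hkj))⟩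
  · simp
  · exact fun i hi => hx (mem_Iic.1 hi)

theorem continuous_descOrderStat [TopologicalSpace α] [OrderClosedTopology α] :
    Continuous (descOrderStat (α := α) k) :=
  Continuous.finset_sup'_apply _ fun _ _ =>
    Continuous.finset_inf'_apply _ fun i _ => continuous_apply i

end DescOrderStat

section SoftThreshold

variable {α : Type*} [AddCommGroup α] [LinearOrder α]

/-- For `0 ≤ t` this is `SignType.sign s * max (|s| - t) 0`, written through the clamp of `s` to
`[-t, t]` so that it makes sense in any ordered group and is visibly continuous. -/
def softThreshold (t s : α) : α := s - max (-t) (min s t)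

theorem Continuous.softThreshold [TopologicalSpace α] [OrderClosedTopology α]
    [IsTopologicalAddGroup α] {X : Type*} [TopologicalSpace X] {t s : X → α}
    (ht : Continuous t) (hs : Continuous s) :
    Continuous fun x => _root_.softThreshold (t x) (s x) := by
  unfold _root_.softThreshold; fun_prop

variable [IsOrderedAddMonoid α] {t s : α}

theorem softThreshold_of_abs_le (h : |s| ≤ t) : softThreshold t s = 0 := by
  rw [softThreshold, min_eq_left (abs_le.1 h).2, max_eq_right (abs_le.1 h).1, sub_self]

theorem softThreshold_of_le (ht : 0 ≤ t) (h : t ≤ s) : softThreshold t s = s - t := by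
  rw [softThreshold, min_eq_right h, max_eq_right (neg_le_self ht)]

theorem softThreshold_neg (ht : 0 ≤ t) (s : α) : softThreshold t (-s) = -softThreshold t s := by
  have clamp_neg : max (-t) (min (-s) t) = -max (-t) (min s t) := by
    rw [max_min_distrib_left, max_eq_right (neg_le_self ht), ← min_neg_neg, neg_neg,
      ← max_neg_neg, min_comm, max_comm]
  rw [softThreshold, softThreshold, clamp_neg, neg_sub, sub_neg_eq_add, neg_add_eq_sub]

end SoftThreshold

section SoftThresholdByOrderStat

variable {n : ℕ} (k : Fin n)

noncomputable def softThresholdByOrderStat (x : Fin n → ℝ) : Fin n → ℝ :=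
  fun i => softThreshold (descOrderStat k fun j => |x j|) (x i)

theorem continuous_softThresholdByOrderStat : Continuous (softThresholdByOrderStat k) :=
  continuous_pi fun i => ((continuous_descOrderStat (k := k)).comp
    (continuous_pi fun j => (continuous_apply j).abs)).softThreshold (continuous_apply i)

theorem softThresholdByOrderStat_apply_of_antitone {x : Fin n → ℝ} (hx : Antitone x)
    (hpos : ∀ i, 0 ≤ x i) (i : Fin n) :
    softThresholdByOrderStat k x i = if i < k then x i - x k else 0 := by
  have hk : (descOrderStat k fun j => |x j|) = x k := by
    simp only [abs_of_nonneg (hpos _)]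
    exact descOrderStat_of_antitone hx
  rw [softThresholdByOrderStat, hk]
  split_ifs with hi
  · exact softThreshold_of_le (hpos k) (hx hi.le)
  · exact softThreshold_of_abs_le ((abs_of_nonneg (hpos i)).trans_le (hx (not_lt.1 hi)))

theorem softThresholdByOrderStat_signed_perm {x ε : Fin n → ℝ}
    (hε : ∀ i, ε i = 1 ∨ ε i = -1) (σ : Equiv.Perm (Fin n)) :
    softThresholdByOrderStat k (fun i => ε i * x (σ.symm i)) =
      fun i => ε i * softThresholdByOrderStat k x (σ.symm i) := by
  have habs : (fun i => |ε i * x (σ.symm i)|) = (fun i => |x i|) ∘ σ.symm := by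
    funext i; rcases hε i with h | h <;> simp [h]
  have ht : 0 ≤ descOrderStat k fun j => |x j| :=
    le_descOrderStat (S := Iic k) (by simp) fun i _ => abs_nonneg (x i)
  funext i
  simp only [softThresholdByOrderStat, habs, descOrderStat_comp_perm]
  rcases hε i with h | h <;> simp [h, softThreshold_neg ht]

theorem ncard_softThresholdByOrderStat_ne_zero_le (x : Fin n → ℝ) :
    {i | softThresholdByOrderStat k x i ≠ 0}.ncard ≤ k := by
  calc {i | softThresholdByOrderStat k x i ≠ 0}.ncard
      ≤ (({i | (descOrderStat k fun j => |x j|) < |x i|} : Finset (Fin n)) :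
          Set (Fin n)).ncard :=
        Set.ncard_le_ncard (fun i hi => by
          simpa using lt_of_not_ge (mt softThreshold_of_abs_le hi)) (Set.toFinite _)
    _ ≤ k := by rw [Set.ncard_coe_finset]; exact card_lt_descOrderStat_le

end SoftThresholdByOrderStat

theorem exists_continuous_equivariant_extension_general (m n : ℕ) (hmn : m < n)
    (f0 : (Fin n → ℝ) → (Fin n → ℝ))
    (hf0 : ∀ (x : Fin n → ℝ) (i : Fin n),
      f0 x i = if (i : ℕ) < m then x i - x ⟨m, hmn⟩ else 0) :
    ∃ f : (Fin n → ℝ) → (Fin n → ℝ), Continuous f ∧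
      (∀ x : Fin n → ℝ, (∀ i j : Fin n, i ≤ j → x j ≤ x i) → (∀ i, 0 ≤ x i) →
        f x = f0 x) ∧
      (∀ (x : Fin n → ℝ) (ε : Fin n → ℝ) (σ : Equiv.Perm (Fin n)),
        (∀ i, ε i = 1 ∨ ε i = -1) →
        f (fun i => ε i * x (σ.symm i)) = fun i => ε i * f x (σ.symm i)) ∧
      (∀ x : Fin n → ℝ, {i : Fin n | f x i ≠ 0}.ncard ≤ m) := by
  refine ⟨softThresholdByOrderStat ⟨m, hmn⟩, continuous_softThresholdByOrderStat _,
    fun x hx hpos => funext fun i => ?_,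
    fun x ε σ hε => softThresholdByOrderStat_signed_perm _ hε σ,
    ncard_softThresholdByOrderStat_ne_zero_le _⟩
  rw [hf0, softThresholdByOrderStat_apply_of_antitone _ hx hpos]
  rfl

/-- There exists a continuous `G`-equivariant extension `f : ℝ^n → ℝ^n` of `f₀ : Λ_n → Λ_n`,
whose image consists of vectors with at most `m` nonzero coordinates. Here a signed
permutation `g = (ε, σ)` acts by `(g·x)_i = ε_i x_{σ⁻¹(i)}`. -/
theorem exists_continuous_equivariant_extension (m n : ℕ) (hm : 1 ≤ m) (hmn : m < n)
    (f0 : (Fin n → ℝ) → (Fin n → ℝ))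
    (hf0 : ∀ (x : Fin n → ℝ) (i : Fin n),
      f0 x i = if (i : ℕ) < m then x i - x ⟨m, hmn⟩ else 0) :
    ∃ f : (Fin n → ℝ) → (Fin n → ℝ), Continuous f ∧
      (∀ x : Fin n → ℝ, (∀ i j : Fin n, i ≤ j → x j ≤ x i) → (∀ i, 0 ≤ x i) →
        f x = f0 x) ∧
      (∀ (x : Fin n → ℝ) (ε : Fin n → ℝ) (σ : Equiv.Perm (Fin n)),
        (∀ i, ε i = 1 ∨ ε i = -1) →
        f (fun i => ε i * x (σ.symm i)) = fun i => ε i * f x (σ.symm i)) ∧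
      (∀ x : Fin n → ℝ, {i : Fin n | f x i ≠ 0}.ncard ≤ m) :=
  exists_continuous_equivariant_extension_general m n hmn f0 hf0
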